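/- arXiv:0711.5003 — 3 statements merged into one kernel-verified Lean document; each statement's English description precedes it below -/
import Mathlib

section
/- Let γ = (γ₁, γ₂) : [a,b] → ℝ^m × ℝ^s be a Lipschitz curve satisfying the contact equation γ₂'(t) = ½ B(γ₁(t), γ₁'(t)) for a.e. t ∈ [a,b]. Then there exists a constant C > 0 depending only on B (one may take C = 1 + (‖B‖/2)^{1/2}, with ‖B‖ the operator norm of B) such that for all a ≤ τ₁ ≤ τ₂ ≤ b one has d_B(γ(τ₁), γ(τ₂)) ≤ C ∫_{τ₁}^{τ₂} |γ₁'(t)| dt. -/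
open MeasureTheory Topology ENNReal

/-- `ℝ^n` with the Euclidean norm. -/
abbrev Euc (n : ℕ) : Type := EuclideanSpace ℝ (Fin n)

/-- The gauge distance of the two-step Carnot group `G_B = ℝ^m × ℝ^s` in exponential
coordinates: `d_B(p,q) = N(p⁻¹·q)` with `N(x,y) = |x| + |y|^{1/2}`, where
`p⁻¹·q = (q₁ - p₁, q₂ - p₂ - ½ B(p₁, q₁))`. -/
noncomputable def gaugeDist {m s : ℕ}
    (B : Euc m →L[ℝ] Euc m →L[ℝ] Euc s) (p q : Euc m × Euc s) : ℝ :=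
  ‖q.1 - p.1‖ + Real.sqrt ‖q.2 - p.2 - (1 / 2 : ℝ) • B p.1 q.1‖

/-!
The horizontal component of `γ(τ₁)⁻¹·γ(τ₂)` is `γ₁(τ₂) - γ₁(τ₁)`, of norm at most the length
`L = ∫ |γ₁'|`. Its vertical component is `g(τ₂) - g(τ₁)` for `g(t) = γ₂(t) - ½ B(γ₁(τ₁), γ₁(t))`
(antisymmetry gives `B(x, x) = 0`), and by the contact equation
`g'(t) = ½ B(γ₁(t) - γ₁(τ₁), γ₁'(t))`, whose norm is at most `½ ‖B‖ L |γ₁'(t)|`. So the vertical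
component has norm at most `½ ‖B‖ L²`, and its square root is at most `(‖B‖/2)^{1/2} L`.
-/

open Set

section Calculus

variable {E : Type*} [NormedAddCommGroup E] [NormedSpace ℝ E] {f f' : ℝ → E} {φ : ℝ → ℝ}
  {K : NNReal} {a b : ℝ}

theorem LipschitzOnWith.norm_sub_le_integral_of_ae_hasDerivAt (hab : a ≤ b)
    (hf : LipschitzOnWith K f (Icc a b)) (hφ : IntervalIntegrable φ volume a b)
    (hf' : ∀ᵐ t ∂volume.restrict (Ioo a b), HasDerivAt f (f' t) t ∧ ‖f' t‖ ≤ φ t) :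
    ‖f b - f a‖ ≤ ∫ t in a..b, φ t := by
  -- Reduce to the scalar fundamental theorem of calculus through a norming functional.
  obtain ⟨ℓ, hℓ, hℓf⟩ := exists_dual_vector'' ℝ (f b - f a)
  have hac : AbsolutelyContinuousOnInterval (ℓ ∘ f) a b := by
    rw [← uIcc_of_le hab] at hf
    exact (ℓ.lipschitz.comp_lipschitzOnWith hf).absolutelyContinuousOnInterval
  have hderiv : deriv (ℓ ∘ f) ≤ᵐ[volume.restrict (Icc a b)] φ := by
    rw [← Measure.restrict_congr_set Ioo_ae_eq_Icc]
    filter_upwards [hf'] with t ⟨hft, hφt⟩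
    calc deriv (ℓ ∘ f) t = ℓ (f' t) := (ℓ.hasFDerivAt.comp_hasDerivAt t hft).deriv
      _ ≤ 1 * ‖f' t‖ := (le_abs_self _).trans (ℓ.le_of_opNorm_le hℓ _)
      _ ≤ φ t := by rwa [one_mul]
  calc ‖f b - f a‖ = ∫ t in a..b, deriv (ℓ ∘ f) t := by
        rw [hac.integral_deriv_eq_sub, Function.comp_apply, Function.comp_apply, ← map_sub, hℓf,
          RCLike.ofReal_real_eq_id, id]
    _ ≤ ∫ t in a..b, φ t :=
        intervalIntegral.integral_mono_ae_restrict hab hac.intervalIntegrable_deriv hφ hderiv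

theorem LipschitzOnWith.intervalIntegrable_deriv [CompleteSpace E] (hab : a ≤ b)
    (hf : LipschitzOnWith K f (Icc a b)) : IntervalIntegrable (deriv f) volume a b := by
  rw [intervalIntegrable_iff_integrableOn_Ioc_of_le hab]
  refine Measure.integrableOn_of_bounded measure_Ioc_lt_top.ne
    (aestronglyMeasurable_deriv f _) (M := K) ?_
  rw [← Measure.restrict_congr_set Ioo_ae_eq_Ioc]
  filter_upwards [ae_restrict_mem measurableSet_Ioo] with t ht
  exact norm_deriv_le_of_lipschitzOn (Icc_mem_nhds ht.1 ht.2) hf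

theorem LipschitzOnWith.norm_sub_le_integral_norm_deriv [CompleteSpace E] (hab : a ≤ b)
    (hf : LipschitzOnWith K f (Icc a b))
    (hd : ∀ᵐ t ∂volume.restrict (Ioo a b), DifferentiableAt ℝ f t) :
    ‖f b - f a‖ ≤ ∫ t in a..b, ‖deriv f t‖ :=
  hf.norm_sub_le_integral_of_ae_hasDerivAt hab (hf.intervalIntegrable_deriv hab).norm
    (hd.mono fun _ ht => ⟨ht.hasDerivAt, le_rfl⟩)

end Calculus

section Contact

variable {E F : Type*} [NormedAddCommGroup E] [NormedSpace ℝ E] [CompleteSpace E]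
  [NormedAddCommGroup F] [NormedSpace ℝ F]

theorem norm_sub_sub_half_bilinear_le_of_contact (B : E →L[ℝ] E →L[ℝ] F)
    (hB : ∀ x, B x x = 0) {a b : ℝ} (hab : a ≤ b) {γ₁ : ℝ → E} {γ₂ : ℝ → F} {K₁ K₂ : NNReal}
    (h₁ : LipschitzOnWith K₁ γ₁ (Icc a b)) (h₂ : LipschitzOnWith K₂ γ₂ (Icc a b))
    (hcontact : ∀ᵐ t ∂volume.restrict (Ioo a b),
      DifferentiableAt ℝ γ₁ t ∧ HasDerivAt γ₂ ((1 / 2 : ℝ) • B (γ₁ t) (deriv γ₁ t)) t) :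
    ‖γ₂ b - γ₂ a - (1 / 2 : ℝ) • B (γ₁ a) (γ₁ b)‖ ≤
      ‖B‖ / 2 * (∫ t in a..b, ‖deriv γ₁ t‖) ^ 2 := by
  set L := ∫ t in a..b, ‖deriv γ₁ t‖
  have hint := (h₁.intervalIntegrable_deriv hab).norm
  have hL : ∀ t ∈ Icc a b, ‖γ₁ t - γ₁ a‖ ≤ L := by
    intro t ht
    have hd : ∀ᵐ u ∂volume.restrict (Ioo a t), DifferentiableAt ℝ γ₁ u :=
      ae_restrict_of_ae_restrict_of_subset (Ioo_subset_Ioo_right ht.2)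
        (hcontact.mono fun _ h => h.1)
    calc ‖γ₁ t - γ₁ a‖ ≤ ∫ u in a..t, ‖deriv γ₁ u‖ :=
          (h₁.mono (Icc_subset_Icc_right ht.2)).norm_sub_le_integral_norm_deriv ht.1 hd
      _ ≤ L := intervalIntegral.integral_mono_interval le_rfl ht.1 ht.2
          (.of_forall fun _ => norm_nonneg _) hint
  set C : E →L[ℝ] F := (1 / 2 : ℝ) • B (γ₁ a)
  have hg : LipschitzOnWith _ (fun t => γ₂ t - C (γ₁ t)) (Icc a b) :=
    h₂.sub (C.lipschitz.comp_lipschitzOnWith h₁)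
  have hg' : ∀ᵐ t ∂volume.restrict (Ioo a b),
      HasDerivAt (fun t => γ₂ t - C (γ₁ t)) ((1 / 2 : ℝ) • B (γ₁ t - γ₁ a) (deriv γ₁ t)) t ∧
      ‖(1 / 2 : ℝ) • B (γ₁ t - γ₁ a) (deriv γ₁ t)‖ ≤ ‖B‖ / 2 * L * ‖deriv γ₁ t‖ := by
    filter_upwards [hcontact, ae_restrict_mem measurableSet_Ioo] with t ⟨hd₁, hd₂⟩ ht
    constructor
    · have hdC : HasDerivAt (fun t => C (γ₁ t)) (C (deriv γ₁ t)) t :=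
        C.hasFDerivAt.comp_hasDerivAt t hd₁.hasDerivAt
      convert hd₂.fun_sub hdC using 1
      simp only [C, map_sub, sub_apply, smul_apply, smul_sub]
    · calc ‖(1 / 2 : ℝ) • B (γ₁ t - γ₁ a) (deriv γ₁ t)‖
          ≤ 1 / 2 * (‖B‖ * ‖γ₁ t - γ₁ a‖ * ‖deriv γ₁ t‖) := by
            rw [norm_smul, Real.norm_of_nonneg (by norm_num)]
            gcongr
            exact B.le_opNorm₂ _ _
        _ ≤ 1 / 2 * (‖B‖ * L * ‖deriv γ₁ t‖) := by
            gcongr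
            exact hL t (Ioo_subset_Icc_self ht)
        _ = ‖B‖ / 2 * L * ‖deriv γ₁ t‖ := by ring
  have key := hg.norm_sub_le_integral_of_ae_hasDerivAt hab (hint.const_mul (‖B‖ / 2 * L)) hg'
  have hgab : γ₂ b - C (γ₁ b) - (γ₂ a - C (γ₁ a)) =
      γ₂ b - γ₂ a - (1 / 2 : ℝ) • B (γ₁ a) (γ₁ b) := by
    simp only [C, smul_apply, hB, smul_zero]
    abel
  rw [← hgab]
  refine key.trans (le_of_eq ?_)
  rw [intervalIntegral.integral_const_mul]
  ring

end Contact

theorem stmt1_general {m s : ℕ}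
    (B : Euc m →L[ℝ] Euc m →L[ℝ] Euc s)
    (hB : ∀ u v, B u v = - B v u)
    (a b : ℝ)
    (γ₁ : ℝ → Euc m) (γ₂ : ℝ → Euc s) (K : NNReal)
    (h₁ : LipschitzOnWith K γ₁ (Set.Icc a b))
    (h₂ : LipschitzOnWith K γ₂ (Set.Icc a b))
    (hcontact : ∀ᵐ t ∂ volume.restrict (Set.Ioo a b),
      DifferentiableAt ℝ γ₁ t ∧
      HasDerivAt γ₂ ((1 / 2 : ℝ) • B (γ₁ t) (deriv γ₁ t)) t) :
    ∀ τ₁ τ₂, a ≤ τ₁ → τ₁ ≤ τ₂ → τ₂ ≤ b →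
      gaugeDist B (γ₁ τ₁, γ₂ τ₁) (γ₁ τ₂, γ₂ τ₂) ≤
        (1 + Real.sqrt (‖B‖ / 2)) * ∫ t in τ₁..τ₂, ‖deriv γ₁ t‖ := by
  intro τ₁ τ₂ haτ₁ hτ hτ₂b
  have hsub : Icc τ₁ τ₂ ⊆ Icc a b := Icc_subset_Icc haτ₁ hτ₂b
  have hcontact' := ae_restrict_of_ae_restrict_of_subset (Ioo_subset_Ioo haτ₁ hτ₂b) hcontact
  set L := ∫ t in τ₁..τ₂, ‖deriv γ₁ t‖
  have hL : 0 ≤ L := intervalIntegral.integral_nonneg hτ fun _ _ => norm_nonneg _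
  have hhor : ‖γ₁ τ₂ - γ₁ τ₁‖ ≤ L :=
    (h₁.mono hsub).norm_sub_le_integral_norm_deriv hτ (hcontact'.mono fun _ h => h.1)
  have hBdiag : ∀ x, B x x = 0 := fun x => by
    simpa [eq_neg_iff_add_eq_zero.mp (hB x x)] using two_smul ℝ (B x x)
  have hver := norm_sub_sub_half_bilinear_le_of_contact B hBdiag hτ (h₁.mono hsub)
    (h₂.mono hsub) hcontact'
  calc gaugeDist B (γ₁ τ₁, γ₂ τ₁) (γ₁ τ₂, γ₂ τ₂)
      ≤ L + Real.sqrt (‖B‖ / 2 * L ^ 2) := add_le_add hhor (Real.sqrt_le_sqrt hver)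
    _ = (1 + Real.sqrt (‖B‖ / 2)) * L := by
      rw [Real.sqrt_mul (by positivity), Real.sqrt_sq hL]
      ring

/-- length estimate for horizontal (contact) Lipschitz curves in a two-step
group, with the explicit constant `C = 1 + (‖B‖/2)^{1/2}`. -/
theorem stmt1 {m s : ℕ} (hm : 1 ≤ m) (hs : 1 ≤ s)
    (B : Euc m →L[ℝ] Euc m →L[ℝ] Euc s)
    (hB : ∀ u v, B u v = - B v u)
    (a b : ℝ)
    (γ₁ : ℝ → Euc m) (γ₂ : ℝ → Euc s) (K : NNReal)
    (h₁ : LipschitzOnWith K γ₁ (Set.Icc a b))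
    (h₂ : LipschitzOnWith K γ₂ (Set.Icc a b))
    (hcontact : ∀ᵐ t ∂ volume.restrict (Set.Ioo a b),
      DifferentiableAt ℝ γ₁ t ∧
      HasDerivAt γ₂ ((1 / 2 : ℝ) • B (γ₁ t) (deriv γ₁ t)) t) :
    ∀ τ₁ τ₂, a ≤ τ₁ → τ₁ ≤ τ₂ → τ₂ ≤ b →
      gaugeDist B (γ₁ τ₁, γ₂ τ₁) (γ₁ τ₂, γ₂ τ₂) ≤
        (1 + Real.sqrt (‖B‖ / 2)) * ∫ t in τ₁..τ₂, ‖deriv γ₁ t‖ :=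
  stmt1_general B hB a b γ₁ γ₂ K h₁ h₂ hcontact
end

section
/- Let O ⊂ ℝ^q be an open convex set and let F = (F₁, F₂) : O → ℝ^m × ℝ^s be Lipschitz (with respect to Euclidean distances) such that at almost every point x ∈ O where F is differentiable the contact equations DF₂(x)v = ½ B(F₁(x), DF₁(x)v) hold for all v ∈ ℝ^q. Then there exists a constant C > 0, depending only on B, such that d_B(F(x), F(x')) ≤ C · Lip(F₁) · |x − x'| for all x, x' ∈ O, where Lip(F₁) is the Lipschitz constant of F₁. -/
open MeasureTheory Topology ENNReal

/-!
The horizontal part of `d_B(F x, F y)` is controlled by `Lip(F₁)` directly. For the vertical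
part, follow the segment `γ` from `x` to `y`: by the contact equations, the vertical component
of `F(x)⁻¹ · F(γ t)` has derivative `½ B(F₁(γ t) - F₁(x), DF₁(γ t) γ')`, of size at most
`½ ‖B‖ Lip(F₁)² |y - x|²`, so the vertical component of `F(x)⁻¹ · F(y)` is quadratically small.
This needs the contact equations at almost every point of the segment, which by Fubini holds for
almost every pair `(x, y)`; continuity of `F` then gives the estimate for every pair.
-/

open Set Filter
open scoped NNReal Interval

theorem LipschitzOnWith.norm_sub_le_of_ae_hasDerivAt {E : Type*} [NormedAddCommGroup E]
    [NormedSpace ℝ E] {f f' : ℝ → E} {K : ℝ≥0} {a b M : ℝ}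
    (hf : LipschitzOnWith K f (uIcc a b)) (hf' : ∀ᵐ t, t ∈ Ι a b → HasDerivAt f (f' t) t)
    (hM : ∀ᵐ t, t ∈ Ι a b → ‖f' t‖ ≤ M) :
    ‖f b - f a‖ ≤ M * |b - a| := by
  obtain ⟨φ, hφ_norm, hφ⟩ := exists_dual_vector'' ℝ (f b - f a)
  have hφf : AbsolutelyContinuousOnInterval (φ ∘ f) a b :=
    (φ.lipschitz.comp_lipschitzOnWith hf).absolutelyContinuousOnInterval
  calc ‖f b - f a‖ = ∫ t in a..b, deriv (φ ∘ f) t := by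
        rw [hφf.integral_deriv_eq_sub, Function.comp_apply, Function.comp_apply, ← map_sub, hφ]; rfl
    _ ≤ ‖∫ t in a..b, deriv (φ ∘ f) t‖ := Real.le_norm_self _
    _ ≤ M * |b - a| := by
      refine intervalIntegral.norm_integral_le_of_norm_le_const_ae ?_
      filter_upwards [hf', hM] with t hft hMt ht
      rw [((φ.hasFDerivAt.comp_hasDerivAt t (hft ht))).deriv]
      calc ‖φ (f' t)‖ ≤ ‖φ‖ * ‖f' t‖ := φ.le_opNorm _
        _ ≤ ‖f' t‖ := mul_le_of_le_one_left (norm_nonneg _) hφ_norm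
        _ ≤ M := hMt ht

theorem ae_prod_ae_lineMap {E : Type*} [NormedAddCommGroup E] [NormedSpace ℝ E]
    [MeasurableSpace E] [BorelSpace E] [FiniteDimensional ℝ E] {μ : Measure E}
    [μ.IsAddHaarMeasure] {P : E → Prop} (hP : ∀ᵐ z ∂μ, P z) :
    ∀ᵐ p ∂μ.prod μ, ∀ᵐ t : ℝ, P (AffineMap.lineMap p.1 p.2 t) := by
  obtain ⟨N, hPN, hNm, hN0⟩ := exists_measurable_superset_of_null (ae_iff.1 hP)
  have hN : ∀ ⦃z⦄, z ∉ N → P z := fun z hz => by_contra fun h => hz (hPN h)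
  have hmeas : MeasurableSet {w : (E × E) × ℝ | AffineMap.lineMap w.1.1 w.1.2 w.2 ∉ N} :=
    (hNm.preimage (by simp only [AffineMap.lineMap_apply_module]; fun_prop)).compl
  suffices ∀ᵐ t : ℝ, ∀ᵐ p ∂μ.prod μ, AffineMap.lineMap p.1 p.2 t ∉ N by
    filter_upwards [(Measure.ae_ae_comm hmeas).2 this] with p hp
    filter_upwards [hp] with t ht using hN ht
  filter_upwards [Measure.ae_ne volume 0] with t ht
  refine (Measure.ae_prod_iff_ae_ae ?_).2 (Eventually.of_forall fun x => ?_)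
  · exact (hNm.preimage (by simp only [AffineMap.lineMap_apply_module]; fun_prop)).compl
  have hN0' : ∀ᵐ z ∂μ, (1 - t) • x + z ∉ N :=
    (measurePreserving_add_left μ ((1 - t) • x)).quasiMeasurePreserving.ae
      (measure_eq_zero_iff_ae_notMem.1 hN0)
  filter_upwards [(Measure.quasiMeasurePreserving_smul μ ht).ae hN0'] with y hy
  rwa [AffineMap.lineMap_apply_module]

theorem MeasureTheory.Measure.le_on_open_of_ae_le {X Y : Type*} [TopologicalSpace X]
    [MeasurableSpace X] [OpensMeasurableSpace X] {μ : Measure X} [μ.IsOpenPosMeasure]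
    [TopologicalSpace Y] [T2Space Y] [SemilatticeSup Y] [ContinuousSup Y] {U : Set X} {f g : X → Y}
    (h : f ≤ᵐ[μ.restrict U] g) (hU : IsOpen U) (hf : ContinuousOn f U) (hg : ContinuousOn g U) :
    ∀ x ∈ U, f x ≤ g x := fun _ hx =>
  sup_eq_right.1 <| Measure.eqOn_open_of_ae_eq (h.mono fun _ => sup_eq_right.2) hU (hf.sup hg) hg hx

variable {E V W : Type*} [NormedAddCommGroup E] [NormedSpace ℝ E] [NormedAddCommGroup V]
  [NormedSpace ℝ V] [NormedAddCommGroup W] [NormedSpace ℝ W]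

def IsContactPoint (B : V →L[ℝ] V →L[ℝ] W) (F : E → V × W) (z : E) : Prop :=
  DifferentiableAt ℝ F z ∧ ∀ v, (fderiv ℝ F z v).2 = (1 / 2 : ℝ) • B (F z).1 (fderiv ℝ F z v).1

/-- The vertical component of `p⁻¹ · q` in the group `G_B`. -/
noncomputable def vertDiff (B : V →L[ℝ] V →L[ℝ] W) (p q : V × W) : W :=
  q.2 - p.2 - (1 / 2 : ℝ) • B p.1 q.1

theorem ContinuousOn.vertDiff {X : Type*} [TopologicalSpace X] (B : V →L[ℝ] V →L[ℝ] W)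
    {f g : X → V × W} {S : Set X} (hf : ContinuousOn f S) (hg : ContinuousOn g S) :
    ContinuousOn (fun x => vertDiff B (f x) (g x)) S := by
  unfold _root_.vertDiff; fun_prop

section
variable {B : V →L[ℝ] V →L[ℝ] W} {F : E → V × W} {O : Set E} {K₁ : ℝ≥0} {z : E}

theorem norm_fderiv_fst_apply_le (hF : DifferentiableAt ℝ F z) (hO : O ∈ 𝓝 z)
    (hF₁ : LipschitzOnWith K₁ (fun z => (F z).1) O) (v : E) :
    ‖(fderiv ℝ F z v).1‖ ≤ K₁ * ‖v‖ := by
  have hfst : (fderiv ℝ F z v).1 = fderiv ℝ (fun z => (F z).1) z v := by rw [fderiv.fst hF]; rfl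
  rw [hfst]
  exact (ContinuousLinearMap.le_opNorm _ v).trans
    (mul_le_mul_of_nonneg_right (norm_fderiv_le_of_lipschitzOn ℝ hO hF₁) (norm_nonneg v))

theorem IsContactPoint.norm_fderiv_snd_sub_le (hz : IsContactPoint B F z) (hO : O ∈ 𝓝 z)
    (hF₁ : LipschitzOnWith K₁ (fun z => (F z).1) O) (u : V) (v : E) :
    ‖(fderiv ℝ F z v).2 - (1 / 2 : ℝ) • B u (fderiv ℝ F z v).1‖ ≤
      ‖B‖ / 2 * ‖(F z).1 - u‖ * (K₁ * ‖v‖) := by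
  calc ‖(fderiv ℝ F z v).2 - (1 / 2 : ℝ) • B u (fderiv ℝ F z v).1‖
      = 1 / 2 * ‖B ((F z).1 - u) (fderiv ℝ F z v).1‖ := by
        rw [hz.2 v, map_sub, sub_apply, ← smul_sub, norm_smul]; norm_num
    _ ≤ 1 / 2 * (‖B‖ * ‖(F z).1 - u‖ * (K₁ * ‖v‖)) := by
        gcongr
        exact (B.le_opNorm₂ _ _).trans (by gcongr; exact norm_fderiv_fst_apply_le hz.1 hO hF₁ v)
    _ = ‖B‖ / 2 * ‖(F z).1 - u‖ * (K₁ * ‖v‖) := by ring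

theorem norm_vertDiff_le_of_ae_isContactPoint_lineMap (hB : ∀ u, B u u = 0) (hO : IsOpen O)
    (hconv : Convex ℝ O) {K : ℝ≥0} (hF : LipschitzOnWith K F O)
    (hF₁ : LipschitzOnWith K₁ (fun z => (F z).1) O) {x y : E} (hx : x ∈ O) (hy : y ∈ O)
    (hseg : ∀ᵐ t : ℝ, t ∈ Ι 0 1 → IsContactPoint B F (AffineMap.lineMap (k := ℝ) x y t)) :
    ‖vertDiff B (F x) (F y)‖ ≤ ‖B‖ / 2 * (K₁ * ‖y - x‖) ^ 2 := by
  set γ : ℝ → E := ⇑(AffineMap.lineMap (k := ℝ) x y)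
  set G : V × W →L[ℝ] W := ContinuousLinearMap.snd ℝ V W -
    (1 / 2 : ℝ) • (B (F x).1).comp (ContinuousLinearMap.fst ℝ V W)
  have hG : ∀ p, G p = p.2 - (1 / 2 : ℝ) • B (F x).1 p.1 := fun p => rfl
  have hγO : MapsTo γ (uIcc 0 1) O := fun t ht =>
    hconv.lineMap_mem hx hy (by rwa [uIcc_of_le zero_le_one] at ht)
  have hlip := G.lipschitz.comp_lipschitzOnWith
    (hF.comp (lipschitzWith_lineMap x y).lipschitzOnWith hγO)
  have hderiv : ∀ᵐ t, t ∈ Ι 0 1 →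
      HasDerivAt (G ∘ F ∘ γ) (G (fderiv ℝ F (γ t) (y - x))) t := by
    filter_upwards [hseg] with t ht hti
    exact G.hasFDerivAt.comp_hasDerivAt t
      ((ht hti).1.hasFDerivAt.comp_hasDerivAt t AffineMap.hasDerivAt_lineMap)
  have hbound : ∀ᵐ t, t ∈ Ι 0 1 →
      ‖G (fderiv ℝ F (γ t) (y - x))‖ ≤ ‖B‖ / 2 * (K₁ * ‖y - x‖) ^ 2 := by
    filter_upwards [hseg] with t ht hti
    have htO : γ t ∈ O := hγO (uIoc_subset_uIcc hti)
    have ht₁ : ‖t‖ ≤ 1 := by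
      rw [uIoc_of_le zero_le_one] at hti
      rw [Real.norm_of_nonneg hti.1.le]; exact hti.2
    have hFγ : ‖(F (γ t)).1 - (F x).1‖ ≤ K₁ * ‖y - x‖ :=
      calc ‖(F (γ t)).1 - (F x).1‖ ≤ K₁ * dist (γ t) x := by
            simpa only [dist_eq_norm] using hF₁.dist_le_mul _ htO _ hx
        _ = K₁ * (‖t‖ * ‖y - x‖) := by rw [dist_lineMap_left, dist_eq_norm']
        _ ≤ K₁ * ‖y - x‖ := by gcongr; exact mul_le_of_le_one_left (norm_nonneg _) ht₁
    rw [hG]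
    calc _ ≤ ‖B‖ / 2 * ‖(F (γ t)).1 - (F x).1‖ * (K₁ * ‖y - x‖) :=
          (ht hti).norm_fderiv_snd_sub_le (hO.mem_nhds htO) hF₁ _ _
      _ ≤ ‖B‖ / 2 * (K₁ * ‖y - x‖) * (K₁ * ‖y - x‖) := by gcongr
      _ = ‖B‖ / 2 * (K₁ * ‖y - x‖) ^ 2 := by ring
  have hend : vertDiff B (F x) (F y) = G (F y) - G (F x) := by
    simp only [hG, vertDiff, hB, smul_zero]; abel
  simpa [hend] using hlip.norm_sub_le_of_ae_hasDerivAt hderiv hbound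

theorem norm_vertDiff_le_of_ae_isContactPoint [MeasurableSpace E] [BorelSpace E]
    [FiniteDimensional ℝ E] {μ : Measure E} [μ.IsAddHaarMeasure] (hB : ∀ u, B u u = 0)
    (hO : IsOpen O) (hconv : Convex ℝ O) {K : ℝ≥0} (hF : LipschitzOnWith K F O)
    (hF₁ : LipschitzOnWith K₁ (fun z => (F z).1) O) (hae : ∀ᵐ z ∂μ, z ∈ O → IsContactPoint B F z)
    {x y : E} (hx : x ∈ O) (hy : y ∈ O) :
    ‖vertDiff B (F x) (F y)‖ ≤ ‖B‖ / 2 * (K₁ * ‖y - x‖) ^ 2 := by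
  have hF₀ := hF.continuousOn.comp continuousOn_fst fun p (hp : p ∈ O ×ˢ O) => hp.1
  have hF₀' := hF.continuousOn.comp continuousOn_snd fun p (hp : p ∈ O ×ˢ O) => hp.2
  refine Measure.le_on_open_of_ae_le (μ := μ.prod μ)
    (g := fun p => ‖B‖ / 2 * (K₁ * ‖p.2 - p.1‖) ^ 2) ?_ (hO.prod hO)
    (hF₀.vertDiff B hF₀').norm (by fun_prop) (x, y) ⟨hx, hy⟩
  filter_upwards [ae_restrict_of_ae (ae_prod_ae_lineMap hae),
    ae_restrict_mem (hO.prod hO).measurableSet] with p hp hpO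
  refine norm_vertDiff_le_of_ae_isContactPoint_lineMap hB hO hconv hF hF₁ hpO.1 hpO.2 ?_
  filter_upwards [hp] with t ht hti
  exact ht (hconv.lineMap_mem hpO.1 hpO.2
    (Ioc_subset_Icc_self (by rwa [uIoc_of_le zero_le_one] at hti)))

end

theorem gaugeDist_le_of_le {m s : ℕ} {B : Euc m →L[ℝ] Euc m →L[ℝ] Euc s}
    {p p' : Euc m × Euc s} {a c : ℝ} (hc : 0 ≤ c) (h₁ : ‖p'.1 - p.1‖ ≤ a)
    (h₂ : ‖vertDiff B p p'‖ ≤ c * a ^ 2) :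
    gaugeDist B p p' ≤ (1 + √c) * a := by
  have ha : 0 ≤ a := (norm_nonneg _).trans h₁
  have h₂' : √‖vertDiff B p p'‖ ≤ √c * a :=
    calc √‖vertDiff B p p'‖ ≤ √(c * a ^ 2) := Real.sqrt_le_sqrt h₂
      _ = √c * a := by rw [Real.sqrt_mul hc, Real.sqrt_sq ha]
  calc gaugeDist B p p' = ‖p'.1 - p.1‖ + √‖vertDiff B p p'‖ := rfl
    _ ≤ a + √c * a := add_le_add h₁ h₂'
    _ = (1 + √c) * a := by ring

theorem stmt3_general {q m s : ℕ}
    (B : Euc m →L[ℝ] Euc m →L[ℝ] Euc s) (hB : ∀ u v, B u v = - B v u) :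
    ∃ C : ℝ, 0 < C ∧
      ∀ (O : Set (Euc q)), IsOpen O → Convex ℝ O →
      ∀ (F : Euc q → Euc m × Euc s) (K K₁ : NNReal),
        LipschitzOnWith K F O →
        LipschitzOnWith K₁ (fun x => (F x).1) O →
        (∀ᵐ x ∂ volume.restrict O, DifferentiableAt ℝ F x →
          ∀ v : Euc q, (fderiv ℝ F x v).2 =
            (1 / 2 : ℝ) • B (F x).1 ((fderiv ℝ F x v).1)) →
        ∀ x ∈ O, ∀ x' ∈ O,
          gaugeDist B (F x) (F x') ≤ C * K₁ * ‖x - x'‖ := by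
  refine ⟨1 + √(‖B‖ / 2), by positivity, ?_⟩
  intro O hO hconv F K K₁ hF hF₁ hcontact x hx x' hx'
  have hBuu : ∀ u, B u u = 0 := fun u => by
    linear_combination (norm := module) (1 / 2 : ℝ) • hB u u
  have hae : ∀ᵐ z, z ∈ O → IsContactPoint B F z := by
    rw [← ae_restrict_iff' hO.measurableSet]
    filter_upwards [ae_restrict_of_ae hF.ae_differentiableWithinAt_of_mem, hcontact,
      ae_restrict_mem hO.measurableSet] with z hzF hz hzO
    have hdiff := (hzF hzO).differentiableAt (hO.mem_nhds hzO)
    exact ⟨hdiff, hz hdiff⟩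
  rw [mul_assoc]
  refine gaugeDist_le_of_le (by positivity) ?_ ?_
  · simpa only [dist_eq_norm, norm_sub_rev x' x] using hF₁.dist_le_mul x' hx' x hx
  · simpa only [norm_sub_rev x' x] using
      norm_vertDiff_le_of_ae_isContactPoint hBuu hO hconv hF hF₁ hae hx hx'

/-- a Lipschitz map `F = (F₁,F₂)` on an open convex set satisfying the
contact equations `DF₂(x)v = ½ B(F₁(x), DF₁(x)v)` at a.e. differentiability point is
Lipschitz into the group, with constant `C · Lip(F₁)` where `C` depends only on `B`. -/
theorem stmt3 {q m s : ℕ} (hq : 1 ≤ q) (hm : 1 ≤ m) (hs : 1 ≤ s)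
    (B : Euc m →L[ℝ] Euc m →L[ℝ] Euc s) (hB : ∀ u v, B u v = - B v u) :
    ∃ C : ℝ, 0 < C ∧
      ∀ (O : Set (Euc q)), IsOpen O → Convex ℝ O →
      ∀ (F : Euc q → Euc m × Euc s) (K K₁ : NNReal),
        LipschitzOnWith K F O →
        LipschitzOnWith K₁ (fun x => (F x).1) O →
        (∀ᵐ x ∂ volume.restrict O, DifferentiableAt ℝ F x →
          ∀ v : Euc q, (fderiv ℝ F x v).2 =
            (1 / 2 : ℝ) • B (F x).1 ((fderiv ℝ F x v).1)) →
        ∀ x ∈ O, ∀ x' ∈ O,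
          gaugeDist B (F x) (F x') ≤ C * K₁ * ‖x - x'‖ :=
  stmt3_general B hB
end

section
/- There is no Lipschitz map a = (a₁, a₂, a₃, a₄, a₅) : [0,1] → ℝ⁵ such that for almost every t ∈ [0,1] all of the following hold: a₁(t)a₂'(t) − a₂(t)a₁'(t) = 0; a₁(t)a₃'(t) − a₃(t)a₁'(t) = t − ½; a₂(t)a₃'(t) − a₃(t)a₂'(t) = t − ½; a₁(t)a₄'(t) − a₄(t)a₁'(t) = t − ½; a₂(t)a₄'(t) − a₄(t)a₂'(t) = t − ½; a₁(t)a₅'(t) − a₅(t)a₁'(t) = t − ½; a₂(t)a₅'(t) − a₅(t)a₂'(t) = 0; a₃(t)a₄'(t) − a₄(t)a₃'(t) = 0; a₃(t)a₅'(t) − a₅(t)a₃'(t) = 0; a₄(t)a₅'(t) − a₅(t)a₄'(t) = 0. -/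
open MeasureTheory

/-- the free 2-step algebra on five generators is not surjective on
isotropic loops: there is no Lipschitz curve `a : [0,1] → ℝ⁵` whose components satisfy
a.e. the displayed system `a_l a_p' − a_p a_l' = σ_{lp}` (components of `[a, a']`). -/
theorem stmt13 :
    ¬ ∃ (a : ℝ → Fin 5 → ℝ) (K : NNReal),
      LipschitzOnWith K a (Set.Icc (0 : ℝ) 1) ∧
      ∀ᵐ t ∂ volume.restrict (Set.Ioo (0 : ℝ) 1),
        ∃ a' : Fin 5 → ℝ, HasDerivAt a a' t ∧
          a t 0 * a' 1 - a t 1 * a' 0 = 0 ∧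
          a t 0 * a' 2 - a t 2 * a' 0 = t - 1 / 2 ∧
          a t 1 * a' 2 - a t 2 * a' 1 = t - 1 / 2 ∧
          a t 0 * a' 3 - a t 3 * a' 0 = t - 1 / 2 ∧
          a t 1 * a' 3 - a t 3 * a' 1 = t - 1 / 2 ∧
          a t 0 * a' 4 - a t 4 * a' 0 = t - 1 / 2 ∧
          a t 1 * a' 4 - a t 4 * a' 1 = 0 ∧
          a t 2 * a' 3 - a t 3 * a' 2 = 0 ∧
          a t 2 * a' 4 - a t 4 * a' 2 = 0 ∧
          a t 3 * a' 4 - a t 4 * a' 3 = 0 := by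
  rintro ⟨a, K, _hLip, hae⟩
  haveI : (ae (volume.restrict (Set.Ioo (0:ℝ) 1))).NeBot := by
    refine ae_neBot.mpr ?_
    simp [Measure.restrict_eq_zero, Real.volume_Ioo]
  have h2 : ∀ᵐ t ∂ volume.restrict (Set.Ioo (0:ℝ) 1), t ≠ (1/2 : ℝ) := by
    refine ae_restrict_of_ae ?_
    have : volume ({(1/2 : ℝ)} : Set ℝ) = 0 := measure_singleton _
    filter_upwards [measure_eq_zero_iff_ae_notMem.mp this] with t ht
    simpa using ht
  obtain ⟨t, ⟨a', _hd, h12, h13, h23, _h14, _h24, h15, h25, _h34, h35, _h45⟩, ht⟩ :=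
    (hae.and h2).exists
  have key : (a t 0 * a' 1 - a t 1 * a' 0) * (a t 2 * a' 4 - a t 4 * a' 2)
      - (a t 0 * a' 2 - a t 2 * a' 0) * (a t 1 * a' 4 - a t 4 * a' 1)
      + (a t 0 * a' 4 - a t 4 * a' 0) * (a t 1 * a' 2 - a t 2 * a' 1) = 0 := by ring
  rw [h12, h13, h15, h23, h25, h35] at key
  have : t - 1/2 = 0 := by nlinarith
  exact ht (by linarith)
end
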